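/- arXiv:2005.10472 — 2 statements merged into one kernel-verified Lean document; each statement's English description precedes it below -/
import Mathlib

section
/- In the algebra of point distributions U_F of a formal supergroup F = (R̂_{p|q}, Δ, ε), the dual basis elements ξ_α (dual to the monomials X^α = x_1^{i_1}⋯x_p^{i_p}φ_1^{j_1}⋯φ_q^{j_q}) satisfy the product formula ξ_α · ξ_β = (−1)^{\bar{α}\bar{β}} (binom(α_1+β_1, α_1)) ξ_{α+β} + lower degree terms, where the lower degree terms contain no constant term; consequently the elements ξ_α with |α| = 1 generate U_F as a superalgebra. -/
/-!
STATEMENT 6 (Point distributions of a formal supergroup).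

A formal supergroup `F = (R̂_{p|q}, Δ, ε)` is a complete topological Hopf
superalgebra structure on `R̂_{p|q} = ℂ[[x_1,…,x_p]] ⊗ Λ(φ_1,…,φ_q)`.  We
encode it by its comultiplication structure constants
`c γ α β` = (coefficient of `X^α ⊗ X^β` in `Δ(X^γ)`), where `X^α` runs over
the topological basis of monomials indexed by
`α ∈ S = ℕ^p × {0,1}^q`.  The axioms below say: `Δ` is continuous (`hcont`),
counital with counit `ε = ξ_0` (`hcounitl`, `hcounitr`), unital
(`hone`, i.e. `Δ(1) = 1 ⊗ 1`), coassociative (`hcoassoc`), and a homomorphism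
of superalgebras `R̂_{p|q} → R̂_{p|q} ⊗̂ R̂_{p|q}` (`hhom`, with all Koszul
signs made explicit).

The space of point distributions `U_F` is the continuous dual, i.e. the space
`S →₀ ℂ` spanned by the dual basis `ξ_α`, with the convolution product `mu`
dual to `Δ` (with the Koszul sign `(−1)^{p(α)p(β)}`).

The statement: the product satisfies
`ξ_α · ξ_β = (−1)^{p(α)p(β)} binom(α₁+β₁, α₁) ξ_{α+β} + (lower degree terms)`
(with the sign from reordering the odd variables, `ξ_{α+β} = 0` if the odd
parts of `α` and `β` overlap), the lower degree terms contain no constant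
term `ξ_0`; and consequently the `ξ_α` with `|α| = 1` generate `U_F` as a
superalgebra.
-/

namespace Stmt6

variable (p q : ℕ)

/-- Monomial indices `S = ℕ^p × {0,1}^q`. -/
abbrev SIdx := (Fin p →₀ ℕ) × (Fin q → Bool)

variable {p q}

def zeroIdx : SIdx p q := (0, fun _ => false)

/-- Number of odd variables occurring in `α` (its parity is `p(α)`). -/
def oddCard (α : SIdx p q) : ℕ := (Finset.univ.filter fun j => α.2 j = true).card

/-- Total degree `|α| = |α₁| + |α₂|`. -/
def deg (α : SIdx p q) : ℕ := (α.1.sum fun _ v => v) + oddCard α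

/-- Koszul sign `(−1)^{p(α) p(β)}`. -/
def koz (α β : SIdx p q) : ℂ := (-1 : ℂ) ^ (oddCard α * oddCard β)

/-- Reordering sign of `θ^a θ^b ↦ θ^{a ∪ b}` (odd variables in increasing
order): `(−1)^{#{(i,j) : j < i, i ∈ a, j ∈ b}}`. -/
def sgn (a b : Fin q → Bool) : ℂ :=
  (-1 : ℂ) ^ (Finset.univ.filter
    fun ij : Fin q × Fin q => ij.2 < ij.1 ∧ a ij.1 = true ∧ b ij.2 = true).card

def oddDisjoint (a b : Fin q → Bool) : Prop := ∀ j, ¬(a j = true ∧ b j = true)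

instance {a b : Fin q → Bool} : Decidable (oddDisjoint a b) := by
  unfold oddDisjoint; infer_instance

/-- Product of monomial indices (`X^α · X^β = ± X^{merge α β}`). -/
noncomputable def merge (α β : SIdx p q) : SIdx p q := (α.1 + β.1, fun j => α.2 j || β.2 j)

/-- Structure constant of the product of `R̂_{p|q}`:
`comb α₁ α₂ α` is the coefficient with which `X^{α₁} ⋅ X^{α₂}` contributes
to `X^α`. -/
noncomputable def comb (α₁ α₂ α : SIdx p q) : ℂ :=
  if α₁.1 + α₂.1 = α.1 ∧ oddDisjoint α₁.2 α₂.2 ∧ (∀ j, α.2 j = (α₁.2 j || α₂.2 j))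
  then sgn α₁.2 α₂.2 else 0

/-- `binom (α₁ + β₁, α₁) = ∏_i binom (α₁ᵢ + β₁ᵢ, α₁ᵢ)`. -/
noncomputable def binomC (α β : SIdx p q) : ℂ :=
  ∏ i : Fin p, ((α.1 i + β.1 i).choose (α.1 i) : ℂ)

/-- The Dirac distribution `ξ_α` as a plain function. -/
noncomputable def xi (α : SIdx p q) : SIdx p q → ℂ := fun γ => if γ = α then 1 else 0

/-- The convolution product on point distributions, dual to `Δ`:
`(x · y)(X^γ) = (x ⊗ y)(Δ X^γ)` with the Koszul sign of the dual pairing. -/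
noncomputable def mu (c : SIdx p q → SIdx p q → SIdx p q → ℂ)
    (x y : SIdx p q → ℂ) : SIdx p q → ℂ := fun γ =>
  ∑ᶠ ab : SIdx p q × SIdx p q, koz ab.1 ab.2 * x ab.1 * y ab.2 * c γ ab.1 ab.2

/-- Iterated products of degree-one `ξ`'s : `M c n` is the set of products
`ξ_{α_1} ⋯ ξ_{α_n} ξ_0` with `|α_i| = 1`. -/
noncomputable def M (c : SIdx p q → SIdx p q → SIdx p q → ℂ) : ℕ → Set (SIdx p q → ℂ)
  | 0 => {xi zeroIdx}
  | n + 1 => {u | ∃ α : SIdx p q, deg α = 1 ∧ ∃ v ∈ M c n, u = mu c (xi α) v}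

end Stmt6

/-!
Write `X^γ = X^g X^{g₂}` with `deg g = 1`. Comparing coefficients of `X^α ⊗ X^β` in
`Δ(X^g) Δ(X^{g₂})`, all terms but the two pairing `X^g` with `1` have too small a degree
for `Δ(X^{g₂})`; so for `deg α + deg β ≤ deg γ` the coefficient `c γ α β` obeys the same
two-term recursion as for the additive formal supergroup `Δ x = x ⊗ 1 + 1 ⊗ x`, where it is
Pascal's rule (even `g`) or the sign rule for the odd variables. By induction on `deg γ`,
`c γ α β` is the additive coefficient, which is `(a)`. Dually, `ξ_g ξ_{g₂}` is a nonzero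
multiple of `ξ_γ` modulo lower degree, and `(b)` follows by induction on `deg γ`.
-/

namespace Stmt6

variable {p q : ℕ}

lemma oddDisjoint.symm {a b : Fin q → Bool} (h : oddDisjoint a b) : oddDisjoint b a :=
  fun k hk => h k hk.symm

lemma oddDisjoint_false_left (b : Fin q → Bool) : oddDisjoint (fun _ => false) b := by
  simp [oddDisjoint]

lemma oddDisjoint_false_right (a : Fin q → Bool) : oddDisjoint a (fun _ => false) := by
  simp [oddDisjoint]

lemma oddDisjoint_merge_left {a b c : SIdx p q} :
    oddDisjoint (merge a b).2 c.2 ↔ oddDisjoint a.2 c.2 ∧ oddDisjoint b.2 c.2 := by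
  simp only [oddDisjoint, merge, Bool.or_eq_true]
  grind

lemma oddDisjoint_merge_right {a b c : SIdx p q} :
    oddDisjoint a.2 (merge b c).2 ↔ oddDisjoint a.2 b.2 ∧ oddDisjoint a.2 c.2 := by
  simp only [oddDisjoint, merge, Bool.or_eq_true]
  grind

lemma merge_comm (α β : SIdx p q) : merge α β = merge β α :=
  Prod.ext (add_comm _ _) (funext fun _ => Bool.or_comm _ _)

lemma merge_assoc (α β γ : SIdx p q) : merge (merge α β) γ = merge α (merge β γ) :=
  Prod.ext (add_assoc _ _ _) (funext fun _ => Bool.or_assoc _ _ _)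

@[simp]
lemma merge_zeroIdx_left (β : SIdx p q) : merge zeroIdx β = β :=
  Prod.ext (zero_add _) (funext fun _ => Bool.false_or _)

@[simp]
lemma merge_zeroIdx_right (α : SIdx p q) : merge α zeroIdx = α :=
  Prod.ext (add_zero _) (funext fun _ => Bool.or_false _)

lemma merge_left_cancel {g α β : SIdx p q} (hα : oddDisjoint g.2 α.2)
    (hβ : oddDisjoint g.2 β.2) (h : merge g α = merge g β) : α = β := by
  refine Prod.ext (add_left_cancel congr($h.1)) (funext fun k => ?_)
  have hk : (g.2 k || α.2 k) = (g.2 k || β.2 k) := congr($h.2 k)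
  have hαk := hα k
  have hβk := hβ k
  revert hk hαk hβk
  cases g.2 k <;> cases α.2 k <;> cases β.2 k <;> simp

@[simp]
lemma oddCard_zeroIdx : oddCard (zeroIdx : SIdx p q) = 0 := by
  simp [oddCard, zeroIdx]

lemma oddCard_eq_zero_iff {α : SIdx p q} : oddCard α = 0 ↔ α.2 = fun _ => false := by
  simp [oddCard, Finset.filter_eq_empty_iff, funext_iff]

lemma oddCard_merge {α β : SIdx p q} (h : oddDisjoint α.2 β.2) :
    oddCard (merge α β) = oddCard α + oddCard β := by
  rw [oddCard, oddCard, oddCard, ← Finset.card_union_of_disjoint]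
  · congr 1
    ext j
    simp [merge]
  · exact Finset.disjoint_filter.2 fun j _ hα hβ => h j ⟨hα, hβ⟩

lemma deg_eq (α : SIdx p q) : deg α = α.1.degree + oddCard α := rfl

lemma deg_merge {α β : SIdx p q} (h : oddDisjoint α.2 β.2) :
    deg (merge α β) = deg α + deg β := by
  rw [deg_eq, oddCard_merge h, merge, map_add, deg_eq, deg_eq]
  ring

lemma deg_eq_zero_iff {α : SIdx p q} : deg α = 0 ↔ α = zeroIdx := by
  rw [deg_eq, Nat.add_eq_zero_iff, Finsupp.degree_eq_zero_iff, oddCard_eq_zero_iff, zeroIdx,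
    Prod.ext_iff]

/-- The index of `X^α / X^g`, with exponents truncated at `0`. -/
noncomputable def divIdx (α g : SIdx p q) : SIdx p q := (α.1 - g.1, fun k => α.2 k && !g.2 k)

lemma oddDisjoint_divIdx (α g : SIdx p q) : oddDisjoint g.2 (divIdx α g).2 := by
  intro k
  simp only [divIdx]
  cases g.2 k <;> simp

lemma divIdx_merge {g β : SIdx p q} (h : oddDisjoint g.2 β.2) : divIdx (merge g β) g = β := by
  refine Prod.ext (add_tsub_cancel_left _ _) (funext fun k => ?_)
  have hk := h k
  simp only [divIdx, merge]
  revert hk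
  cases g.2 k <;> cases β.2 k <;> simp

lemma deg_divIdx_add_one {g α : SIdx p q} (hg : deg g = 1) (h : merge g (divIdx α g) = α) :
    deg (divIdx α g) + 1 = deg α := by
  rw [← congr(deg $h), deg_merge (oddDisjoint_divIdx α g), hg, add_comm]

noncomputable def evenGen (i : Fin p) : SIdx p q := (Finsupp.single i 1, fun _ => false)

def oddGen (j : Fin q) : SIdx p q := (0, fun k => decide (k = j))

lemma deg_evenGen (i : Fin p) : deg (evenGen i : SIdx p q) = 1 := by
  simp [deg_eq, evenGen, oddCard]

lemma deg_oddGen (j : Fin q) : deg (oddGen j : SIdx p q) = 1 := by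
  simp [deg_eq, oddGen, oddCard, Finset.filter_eq']

lemma merge_divIdx_evenGen {α : SIdx p q} {i : Fin p} :
    merge (evenGen i) (divIdx α (evenGen i)) = α ↔ 0 < α.1 i := by
  simp only [merge, divIdx, evenGen, Bool.not_false, Bool.and_true, Bool.false_or,
    Prod.ext_iff, and_true]
  refine ⟨fun h => ?_, fun h => add_tsub_cancel_of_le (Finsupp.single_le_iff.2 h)⟩
  have := congr($h i)
  simp only [Finsupp.add_apply, Finsupp.tsub_apply, Finsupp.single_eq_same] at this
  omega

lemma merge_divIdx_oddGen {α : SIdx p q} {j : Fin q} :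
    merge (oddGen j) (divIdx α (oddGen j)) = α ↔ α.2 j = true := by
  simp only [merge, divIdx, oddGen, tsub_zero, zero_add, Prod.ext_iff, true_and, funext_iff]
  refine ⟨fun h => by simpa using h j, fun h k => ?_⟩
  by_cases hk : k = j <;> simp [hk, h]

lemma eq_evenGen_or_eq_oddGen_of_deg_eq_one {g : SIdx p q} (hg : deg g = 1) :
    (∃ i, g = evenGen i) ∨ ∃ j, g = oddGen j := by
  rw [deg_eq] at hg
  rcases Nat.add_eq_one_iff.1 hg with ⟨h1, h2⟩ | ⟨h1, h2⟩
  · obtain ⟨j, hj⟩ := Finset.card_eq_one.1 h2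
    refine Or.inr ⟨j, Prod.ext (Finsupp.degree_eq_zero_iff _ |>.1 h1) (funext fun k => ?_)⟩
    have := congr(k ∈ $hj)
    simp only [Finset.mem_filter, Finset.mem_univ, true_and, Finset.mem_singleton] at this
    simp [oddGen, ← this]
  · obtain ⟨i, hi⟩ := (Finsupp.sum_eq_one_iff g.1).1 h1
    exact Or.inl ⟨i, Prod.ext hi (oddCard_eq_zero_iff.1 h2)⟩

lemma exists_deg_eq_one_merge {γ : SIdx p q} (hγ : γ ≠ zeroIdx) :
    ∃ g g₂, deg g = 1 ∧ oddDisjoint g.2 g₂.2 ∧ merge g g₂ = γ := by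
  by_cases h1 : γ.1 = 0
  · obtain ⟨j, hj⟩ : ∃ j, γ.2 j = true := by
      by_contra! h
      exact hγ (Prod.ext h1 (funext fun k => by simpa [zeroIdx] using h k))
    exact ⟨oddGen j, _, deg_oddGen j, oddDisjoint_divIdx _ _, merge_divIdx_oddGen.2 hj⟩
  · obtain ⟨i, hi⟩ := Finsupp.ne_iff.1 h1
    exact ⟨evenGen i, _, deg_evenGen i, oddDisjoint_divIdx _ _,
      merge_divIdx_evenGen.2 (Nat.pos_of_ne_zero hi)⟩

lemma koz_ne_zero (α β : SIdx p q) : koz α β ≠ 0 :=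
  pow_ne_zero _ (neg_ne_zero.2 one_ne_zero)

lemma sgn_ne_zero (a b : Fin q → Bool) : sgn a b ≠ 0 :=
  pow_ne_zero _ (neg_ne_zero.2 one_ne_zero)

lemma sgn_mul_self (a b : Fin q → Bool) : sgn a b * sgn a b = 1 := by
  rw [sgn, ← pow_add, ← two_mul, pow_mul, neg_one_sq, one_pow]

@[simp]
lemma sgn_false_left (b : Fin q → Bool) : sgn (fun _ => false) b = 1 := by
  simp [sgn]

@[simp]
lemma sgn_false_right (a : Fin q → Bool) : sgn a (fun _ => false) = 1 := by
  simp [sgn]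

lemma sgn_merge_left {a b c : SIdx p q} (h : oddDisjoint a.2 b.2) :
    sgn (merge a b).2 c.2 = sgn a.2 c.2 * sgn b.2 c.2 := by
  rw [sgn, sgn, sgn, ← pow_add, ← Finset.card_union_of_disjoint]
  · congr 2
    ext ij
    simp only [merge, Finset.mem_filter, Finset.mem_univ, true_and, Finset.mem_union,
      Bool.or_eq_true]
    tauto
  · exact Finset.disjoint_filter.2 fun ij _ ha hb => h ij.1 ⟨ha.2.1, hb.2.1⟩

lemma sgn_merge_right {a b c : SIdx p q} (h : oddDisjoint b.2 c.2) :
    sgn a.2 (merge b c).2 = sgn a.2 b.2 * sgn a.2 c.2 := by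
  rw [sgn, sgn, sgn, ← pow_add, ← Finset.card_union_of_disjoint]
  · congr 2
    ext ij
    simp only [merge, Finset.mem_filter, Finset.mem_univ, true_and, Finset.mem_union,
      Bool.or_eq_true]
    tauto
  · exact Finset.disjoint_filter.2 fun ij _ hb hc => h ij.2 ⟨hb.2.2, hc.2.2⟩

lemma sgn_mul_sgn_swap {α β : SIdx p q} (h : oddDisjoint α.2 β.2) :
    sgn α.2 β.2 * sgn β.2 α.2 = koz α β := by
  rw [sgn, sgn, koz, oddCard, oddCard, mul_comm, ← pow_add, ← Finset.card_product,
    ← Finset.card_image_of_injective _ Prod.swap_injective, ← Finset.card_union_of_disjoint]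
  · congr 2
    ext ⟨x, y⟩
    simp only [Finset.mem_union, Finset.mem_filter, Finset.mem_univ, true_and,
      Finset.mem_image, Prod.exists, Prod.swap_prod_mk, Prod.mk.injEq, Finset.mem_product]
    constructor
    · rintro (⟨a, b, ⟨-, ha, hb⟩, rfl, rfl⟩ | ⟨-, hx, hy⟩) <;>
        exact ⟨by assumption, by assumption⟩
    · rintro ⟨hx, hy⟩
      rcases lt_trichotomy x y with hxy | rfl | hxy
      · exact Or.inl ⟨y, x, ⟨hxy, hy, hx⟩, rfl, rfl⟩
      · exact (h x ⟨hx, hy⟩).elim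
      · exact Or.inr ⟨hxy, hx, hy⟩
  · rw [Finset.disjoint_left]
    rintro _ h1 h2
    simp only [Finset.mem_image, Finset.mem_filter, Finset.mem_univ, true_and, Prod.exists,
      Prod.swap_prod_mk] at h1 h2
    obtain ⟨a, b, ⟨hba, -⟩, rfl⟩ := h1
    exact lt_asymm hba h2.1

lemma sgn_mul_sgn_merge_left {g α' β : SIdx p q} (hα' : oddDisjoint g.2 α'.2)
    (hβ : oddDisjoint α'.2 β.2) :
    sgn g.2 (merge α' β).2 * sgn (merge g α').2 β.2 = sgn g.2 α'.2 * sgn α'.2 β.2 := by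
  rw [sgn_merge_right hβ, sgn_merge_left hα']
  linear_combination (sgn g.2 α'.2 * sgn α'.2 β.2) * sgn_mul_self g.2 β.2

lemma sgn_mul_sgn_merge_right {g α β' : SIdx p q} (hβ' : oddDisjoint g.2 β'.2)
    (hαβ : oddDisjoint α.2 (merge g β').2) :
    sgn g.2 (merge α β').2 * sgn α.2 (merge g β').2 =
      koz g α * sgn g.2 β'.2 * sgn α.2 β'.2 := by
  obtain ⟨hαg, hαβ'⟩ := oddDisjoint_merge_right.1 hαβ
  rw [sgn_merge_right hαβ', sgn_merge_right hβ', ← sgn_mul_sgn_swap hαg.symm]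
  ring

lemma comb_eq_ite (a b α : SIdx p q) :
    comb a b α = if oddDisjoint a.2 b.2 ∧ α = merge a b then sgn a.2 b.2 else 0 := by
  refine if_congr ⟨fun ⟨h1, h2, h3⟩ => ⟨h2, Prod.ext h1.symm (funext h3)⟩, ?_⟩ rfl rfl
  rintro ⟨h, rfl⟩
  exact ⟨rfl, h, fun _ => rfl⟩

lemma eq_merge_of_comb_ne_zero {a b α : SIdx p q} (h : comb a b α ≠ 0) :
    oddDisjoint a.2 b.2 ∧ α = merge a b := by
  rw [comb_eq_ite] at h
  split_ifs at h with hC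
  · exact hC
  · exact absurd rfl h

lemma comb_divIdx (α g : SIdx p q) :
    comb g (divIdx α g) α =
      if merge g (divIdx α g) = α then sgn g.2 (divIdx α g).2 else 0 := by
  rw [comb_eq_ite]
  exact if_congr (by simp [oddDisjoint_divIdx, eq_comm]) rfl rfl

lemma comb_zeroIdx_self (α : SIdx p q) : comb zeroIdx α α = 1 := by
  rw [comb_eq_ite, merge_zeroIdx_left, if_pos ⟨oddDisjoint_false_left _, rfl⟩]
  exact sgn_false_left _

lemma binomC_ne_zero (α β : SIdx p q) : binomC α β ≠ 0 :=
  Finset.prod_ne_zero_iff.2 fun _ _ =>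
    Nat.cast_ne_zero.2 (Nat.choose_pos (Nat.le_add_right _ _)).ne'

lemma binomC_eq_mul_prod_erase (α β : SIdx p q) (i : Fin p) :
    binomC α β = ((α.1 i + β.1 i).choose (α.1 i) : ℂ) *
      ∏ k ∈ Finset.univ.erase i, ((α.1 k + β.1 k).choose (α.1 k) : ℂ) :=
  (Finset.mul_prod_erase _ _ (Finset.mem_univ i)).symm

lemma choose_add_choose_of_pos (m l : ℕ) (h : 0 < m + l) :
    (if 0 < m then (m - 1 + l).choose (m - 1) else 0) +
      (if 0 < l then (m + (l - 1)).choose m else 0) = (m + l).choose m := by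
  rcases m with _ | m <;> rcases l with _ | l
  · simp at h
  · simp
  · simp
  · simp only [add_tsub_cancel_right, if_pos (Nat.succ_pos _)]
    rw [show m + 1 + (l + 1) = (m + l + 1) + 1 by ring, Nat.choose_succ_succ',
      show m + (l + 1) = m + l + 1 by ring, show m + 1 + l = m + l + 1 by ring, add_comm]

lemma binomC_divIdx_evenGen_add {α β : SIdx p q} {i : Fin p} (h : 0 < α.1 i + β.1 i) :
    (if 0 < α.1 i then binomC (divIdx α (evenGen i)) β else 0) +
      (if 0 < β.1 i then binomC α (divIdx β (evenGen i)) else 0) = binomC α β := by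
  have hrest : ∀ γ : SIdx p q, ∀ k ∈ Finset.univ.erase i,
      (divIdx γ (evenGen i)).1 k = γ.1 k :=
    fun γ k hk => by simp [divIdx, evenGen, Finsupp.single_eq_of_ne (Finset.ne_of_mem_erase hk)]
  set R := ∏ k ∈ Finset.univ.erase i, ((α.1 k + β.1 k).choose (α.1 k) : ℂ)
  have hRα : ∏ k ∈ Finset.univ.erase i, (((divIdx α (evenGen i)).1 k + β.1 k).choose
      ((divIdx α (evenGen i)).1 k) : ℂ) = R :=
    Finset.prod_congr rfl fun k hk => by rw [hrest α k hk]
  have hRβ : ∏ k ∈ Finset.univ.erase i, ((α.1 k + (divIdx β (evenGen i)).1 k).choose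
      (α.1 k) : ℂ) = R :=
    Finset.prod_congr rfl fun k hk => by rw [hrest β k hk]
  simp only [binomC_eq_mul_prod_erase _ _ i, hRα, hRβ, ← ite_zero_mul, ← add_mul]
  congr 1
  have := congr(($(choose_add_choose_of_pos _ _ h) : ℂ))
  push_cast [Nat.cast_ite] at this
  simpa [divIdx, evenGen] using this

lemma binomC_divIdx_oddGen_left (α β : SIdx p q) (j : Fin q) :
    binomC (divIdx α (oddGen j)) β = binomC α β := by
  simp [binomC, divIdx, oddGen]

lemma binomC_divIdx_oddGen_right (α β : SIdx p q) (j : Fin q) :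
    binomC α (divIdx β (oddGen j)) = binomC α β := by
  simp [binomC, divIdx, oddGen]

lemma binomC_divIdx_add {g g₂ α β : SIdx p q} (hg : deg g = 1) (hαβ : oddDisjoint α.2 β.2)
    (hγ : merge g g₂ = merge α β) :
    ((if merge g (divIdx α g) = α then binomC (divIdx α g) β else 0) +
      if merge g (divIdx β g) = β then binomC α (divIdx β g) else 0) = binomC α β := by
  rcases eq_evenGen_or_eq_oddGen_of_deg_eq_one hg with ⟨i, rfl⟩ | ⟨j, rfl⟩
  · have : 0 < α.1 i + β.1 i := by
      have := congr($hγ.1 i)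
      simp only [merge, evenGen, Finsupp.add_apply, Finsupp.single_eq_same] at this
      omega
    simpa only [merge_divIdx_evenGen] using binomC_divIdx_evenGen_add this
  · have hj : α.2 j = true ∨ β.2 j = true := by
      simpa [merge, oddGen] using congr($hγ.2 j).symm
    simp only [merge_divIdx_oddGen, binomC_divIdx_oddGen_left, binomC_divIdx_oddGen_right]
    rcases hj with hj | hj
    · simp [hj, show β.2 j = false by simpa [hj] using hαβ j]
    · simp [hj, show α.2 j = false by simpa [hj] using hαβ j]

/-- The structure constants of the additive formal supergroup, `Δ x = x ⊗ 1 + 1 ⊗ x` on the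
generators: the coefficient of `X^α ⊗ X^β` in `Δ(X^γ)`. -/
noncomputable def addCoeff (α β γ : SIdx p q) : ℂ :=
  if oddDisjoint α.2 β.2 ∧ γ = merge α β then sgn α.2 β.2 * binomC α β else 0

lemma addCoeff_zeroIdx_left (β γ : SIdx p q) :
    addCoeff zeroIdx β γ = if γ = β then 1 else 0 := by
  rw [addCoeff, merge_zeroIdx_left, binomC]
  simp [zeroIdx, oddDisjoint_false_left]

lemma addCoeff_zeroIdx_right (α γ : SIdx p q) :
    addCoeff α zeroIdx γ = if γ = α then 1 else 0 := by
  rw [addCoeff, merge_zeroIdx_right, binomC]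
  simp [zeroIdx, oddDisjoint_false_right]

lemma deg_eq_of_addCoeff_ne_zero {α β γ : SIdx p q} (h : addCoeff α β γ ≠ 0) :
    deg γ = deg α + deg β := by
  rw [addCoeff] at h
  split_ifs at h with hC
  · rw [hC.2, deg_merge hC.1]
  · exact absurd rfl h

lemma addCoeff_merge_self {α β : SIdx p q} (h : oddDisjoint α.2 β.2) (δ : SIdx p q) :
    addCoeff α β δ = if δ = merge α β then sgn α.2 β.2 * binomC α β else 0 := by
  simp [addCoeff, h]

lemma and_eq_merge_iff_merge_left {g g₂ α' β : SIdx p q} (hα' : oddDisjoint g.2 α'.2)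
    (hg₂ : oddDisjoint g.2 g₂.2) :
    (oddDisjoint α'.2 β.2 ∧ g₂ = merge α' β) ↔
      (oddDisjoint (merge g α').2 β.2 ∧ merge g g₂ = merge (merge g α') β) := by
  rw [oddDisjoint_merge_left, merge_assoc]
  constructor
  · rintro ⟨h, rfl⟩
    exact ⟨⟨(oddDisjoint_merge_right.1 hg₂).2, h⟩, rfl⟩
  · rintro ⟨⟨hβ, h⟩, hm⟩
    exact ⟨h, merge_left_cancel hg₂ (oddDisjoint_merge_right.2 ⟨hα', hβ⟩) hm⟩

lemma and_eq_merge_iff_merge_right {g g₂ α β' : SIdx p q} (hβ' : oddDisjoint g.2 β'.2)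
    (hg₂ : oddDisjoint g.2 g₂.2) :
    (oddDisjoint α.2 β'.2 ∧ g₂ = merge α β') ↔
      (oddDisjoint α.2 (merge g β').2 ∧ merge g g₂ = merge α (merge g β')) := by
  have := and_eq_merge_iff_merge_left (β := α) hβ' hg₂
  rw [merge_comm β', merge_comm (merge g β')] at this
  constructor
  · rintro ⟨h, hm⟩
    have := this.1 ⟨h.symm, hm⟩
    exact ⟨this.1.symm, this.2⟩
  · rintro ⟨h, hm⟩
    have := this.2 ⟨h.symm, hm⟩
    exact ⟨this.1.symm, this.2⟩

lemma ite_mul_addCoeff_left {g g₂ α' : SIdx p q} (hα' : oddDisjoint g.2 α'.2)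
    (hdisj : oddDisjoint g.2 g₂.2) (α β : SIdx p q) :
    (if merge g α' = α then sgn g.2 α'.2 else 0) * addCoeff α' β g₂ =
      if merge g α' = α ∧ oddDisjoint α.2 β.2 ∧ merge g g₂ = merge α β
      then sgn g.2 g₂.2 * sgn α.2 β.2 * binomC α' β else 0 := by
  by_cases hA : merge g α' = α
  · subst hA
    rw [if_pos rfl, addCoeff, if_congr (and_eq_merge_iff_merge_left hα' hdisj) rfl rfl]
    simp only [true_and]
    split_ifs with hC
    · obtain ⟨hα'β, rfl⟩ := (and_eq_merge_iff_merge_left hα' hdisj).2 hC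
      rw [sgn_mul_sgn_merge_left hα' hα'β]
      ring
    · rw [mul_zero]
  · simp [hA]

lemma koz_mul_ite_mul_addCoeff_right {g g₂ β' : SIdx p q} (hβ' : oddDisjoint g.2 β'.2)
    (hdisj : oddDisjoint g.2 g₂.2) (α β : SIdx p q) :
    koz g α * (if merge g β' = β then sgn g.2 β'.2 else 0) * addCoeff α β' g₂ =
      if merge g β' = β ∧ oddDisjoint α.2 β.2 ∧ merge g g₂ = merge α β
      then sgn g.2 g₂.2 * sgn α.2 β.2 * binomC α β' else 0 := by
  by_cases hB : merge g β' = β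
  · subst hB
    rw [if_pos rfl, addCoeff, if_congr (and_eq_merge_iff_merge_right hβ' hdisj) rfl rfl]
    simp only [true_and]
    split_ifs with hC
    · obtain ⟨-, rfl⟩ := (and_eq_merge_iff_merge_right hβ' hdisj).2 hC
      rw [sgn_mul_sgn_merge_right hβ' hC.1]
      ring
    · rw [mul_zero]
  · simp [hB]

/-- The additive coefficients obey the two-term recursion that `coeff_merge_of_deg_eq_one`
derives for `c` from the homomorphism axiom. -/
theorem addCoeff_merge_of_deg_eq_one {g g₂ : SIdx p q} (hg : deg g = 1)
    (hdisj : oddDisjoint g.2 g₂.2) (α β : SIdx p q) :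
    sgn g.2 g₂.2 * addCoeff α β (merge g g₂) =
      comb g (divIdx α g) α * addCoeff (divIdx α g) β g₂ +
        koz g α * comb g (divIdx β g) β * addCoeff α (divIdx β g) g₂ := by
  rw [comb_divIdx, comb_divIdx, ite_mul_addCoeff_left (oddDisjoint_divIdx α g) hdisj,
    koz_mul_ite_mul_addCoeff_right (oddDisjoint_divIdx β g) hdisj, addCoeff]
  by_cases hC : oddDisjoint α.2 β.2 ∧ merge g g₂ = merge α β
  · simp only [hC, and_true, if_true]
    rw [← binomC_divIdx_add hg hC.1 hC.2]
    split_ifs <;> ring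
  · simp [hC]

def IsCounital (c : SIdx p q → SIdx p q → SIdx p q → ℂ) : Prop :=
  (∀ γ β : SIdx p q, c γ zeroIdx β = if γ = β then 1 else 0) ∧
    ∀ γ α : SIdx p q, c γ α zeroIdx = if γ = α then 1 else 0

def IsMultiplicative (c : SIdx p q → SIdx p q → SIdx p q → ℂ) : Prop :=
  ∀ γ γ' α β : SIdx p q,
    (if oddDisjoint γ.2 γ'.2 then sgn γ.2 γ'.2 * c (merge γ γ') α β else 0)
      = ∑ᶠ x : (SIdx p q × SIdx p q) × SIdx p q × SIdx p q,
          comb x.1.1 x.1.2 α * comb x.2.1 x.2.2 β *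
            ((-1 : ℂ) ^ (oddCard x.2.1 * oddCard x.1.2)) *
            c γ x.1.1 x.2.1 * c γ' x.1.2 x.2.2

variable {c : SIdx p q → SIdx p q → SIdx p q → ℂ}

lemma eq_pair_of_coeff_ne_zero (hε : IsCounital c) {g g₂ a₁ a₂ b₁ b₂ : SIdx p q}
    (hvan : ∀ a b, deg a + deg b < deg g₂ → c g₂ a b = 0)
    (hdeg : deg a₁ + deg a₂ + (deg b₁ + deg b₂) ≤ deg g₂ + 1)
    (h₁ : c g a₁ b₁ ≠ 0) (h₂ : c g₂ a₂ b₂ ≠ 0) :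
    (a₁ = g ∧ b₁ = zeroIdx) ∨ (a₁ = zeroIdx ∧ b₁ = g) := by
  by_cases ha₁ : a₁ = zeroIdx
  · subst ha₁
    exact Or.inr ⟨rfl, by_contra fun h => h₁ (by rw [hε.1, if_neg (Ne.symm h)])⟩
  by_cases hb₁ : b₁ = zeroIdx
  · subst hb₁
    exact Or.inl ⟨by_contra fun h => h₁ (by rw [hε.2, if_neg (Ne.symm h)]), rfl⟩
  refine absurd (hvan a₂ b₂ ?_) h₂
  have := deg_eq_zero_iff.not.2 ha₁
  have := deg_eq_zero_iff.not.2 hb₁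
  omega

/-- Expanding `Δ(X^g X^{g₂})` with `deg g = 1`: apart from the two terms in which `X^g` is
paired with the counit, every term has too small a degree for `Δ(X^{g₂})`. -/
theorem coeff_merge_of_deg_eq_one (hε : IsCounital c) (hΔ : IsMultiplicative c)
    {g g₂ : SIdx p q} (hg : deg g = 1) (hdisj : oddDisjoint g.2 g₂.2)
    (hvan : ∀ a b, deg a + deg b < deg g₂ → c g₂ a b = 0)
    {α β : SIdx p q} (hαβ : deg α + deg β ≤ deg g₂ + 1) :
    sgn g.2 g₂.2 * c (merge g g₂) α β =
      comb g (divIdx α g) α * c g₂ (divIdx α g) β +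
        koz g α * comb g (divIdx β g) β * c g₂ α (divIdx β g) := by
  classical
  have hg0 : g ≠ zeroIdx := fun h => by simp [deg_eq_zero_iff.2 h] at hg
  set pt₁ : (SIdx p q × SIdx p q) × SIdx p q × SIdx p q := ((g, divIdx α g), (zeroIdx, β))
  set pt₂ : (SIdx p q × SIdx p q) × SIdx p q × SIdx p q := ((zeroIdx, α), (g, divIdx β g))
  have hsupp : Function.support (fun x : (SIdx p q × SIdx p q) × SIdx p q × SIdx p q =>
      comb x.1.1 x.1.2 α * comb x.2.1 x.2.2 β * ((-1 : ℂ) ^ (oddCard x.2.1 * oddCard x.1.2)) *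
        c g x.1.1 x.2.1 * c g₂ x.1.2 x.2.2) ⊆ ({pt₁, pt₂} : Finset _) := by
    rintro ⟨⟨a₁, a₂⟩, b₁, b₂⟩ hx
    simp only [Function.mem_support, ne_eq, mul_eq_zero, not_or] at hx
    obtain ⟨⟨⟨⟨hα, hβ⟩, -⟩, hgab⟩, hg₂ab⟩ := hx
    obtain ⟨hdα, rfl⟩ := eq_merge_of_comb_ne_zero hα
    obtain ⟨hdβ, rfl⟩ := eq_merge_of_comb_ne_zero hβ
    rw [deg_merge hdα, deg_merge hdβ] at hαβ
    simp only [Finset.coe_insert, Finset.coe_singleton, Set.mem_insert_iff,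
      Set.mem_singleton_iff, pt₁, pt₂, Prod.mk.injEq]
    rcases eq_pair_of_coeff_ne_zero hε hvan hαβ hgab hg₂ab with ⟨rfl, rfl⟩ | ⟨rfl, rfl⟩
    · simp [divIdx_merge hdα]
    · simp [divIdx_merge hdβ]
  have hne : pt₁ ≠ pt₂ := fun h => hg0 congr($h.1.1)
  have hΔgg₂ := hΔ g g₂ α β
  rw [if_pos hdisj] at hΔgg₂
  rw [hΔgg₂, finsum_eq_finsetSum_of_support_subset _ hsupp, Finset.sum_pair hne]
  simp only [pt₁, pt₂, comb_zeroIdx_self, hε.1, hε.2, if_true, oddCard_zeroIdx, zero_mul,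
    pow_zero, koz]
  ring

theorem coeff_eq_addCoeff (hε : IsCounital c) (hΔ : IsMultiplicative c) {α β γ : SIdx p q}
    (h : deg α + deg β ≤ deg γ) : c γ α β = addCoeff α β γ := by
  induction hn : deg γ using Nat.strong_induction_on generalizing γ α β with
  | _ n ih =>
  by_cases hα : α = zeroIdx
  · rw [hα, hε.1, addCoeff_zeroIdx_left]
  by_cases hβ : β = zeroIdx
  · rw [hβ, hε.2, addCoeff_zeroIdx_right]
  have hα1 := deg_eq_zero_iff.not.2 hα
  have hβ1 := deg_eq_zero_iff.not.2 hβ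
  obtain ⟨g, g₂, hg, hdisj, rfl⟩ := exists_deg_eq_one_merge (γ := γ) fun hγ => by
    rw [deg_eq_zero_iff.2 hγ] at h
    omega
  rw [deg_merge hdisj, hg] at h hn
  have ih₂ : ∀ {a b}, deg a + deg b ≤ deg g₂ → c g₂ a b = addCoeff a b g₂ :=
    fun hab => ih _ (by omega) hab rfl
  have hvan : ∀ a b, deg a + deg b < deg g₂ → c g₂ a b = 0 := fun a b hab => by
    rw [ih₂ hab.le]
    by_contra hne
    have := deg_eq_of_addCoeff_ne_zero hne
    omega
  have h₁ : comb g (divIdx α g) α * c g₂ (divIdx α g) β =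
      comb g (divIdx α g) α * addCoeff (divIdx α g) β g₂ := by
    rw [comb_divIdx]
    split_ifs with hA
    · have := deg_divIdx_add_one hg hA
      rw [ih₂ (by omega)]
    · rw [zero_mul, zero_mul]
  have h₂ : comb g (divIdx β g) β * c g₂ α (divIdx β g) =
      comb g (divIdx β g) β * addCoeff α (divIdx β g) g₂ := by
    rw [comb_divIdx]
    split_ifs with hB
    · have := deg_divIdx_add_one hg hB
      rw [ih₂ (by omega)]
    · rw [zero_mul, zero_mul]
  refine mul_left_cancel₀ (sgn_ne_zero g.2 g₂.2) ?_
  rw [coeff_merge_of_deg_eq_one hε hΔ hg hdisj hvan (by omega), mul_assoc (koz g α), h₁, h₂,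
    addCoeff_merge_of_deg_eq_one hg hdisj, mul_assoc]

variable (c) in
lemma mu_xi_left_apply (α : SIdx p q) (v : SIdx p q → ℂ) (γ : SIdx p q) :
    mu c (xi α) v γ = ∑ᶠ b, koz α b * v b * c γ α b := by
  rw [mu, ← finsum_mem_univ, finsum_mem_inter_support_eq' _ _ (Set.range (Prod.mk α)),
    finsum_mem_range (Prod.mk_right_injective α)]
  · simp [xi]
  · rintro ⟨a, b⟩ h
    suffices a = α by simp [this]
    by_contra ha
    simp [xi, ha] at h

variable (c) in
lemma mu_xi_xi (α β γ : SIdx p q) : mu c (xi α) (xi β) γ = koz α β * c γ α β := by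
  rw [mu_xi_left_apply, finsum_eq_single _ β fun b hb => by simp [xi, hb]]
  simp [xi]

lemma support_xi_finite (α : SIdx p q) : (Function.support (xi α)).Finite :=
  (Set.finite_singleton α).subset fun _ hγ => by_contra fun h => hγ (if_neg h)

lemma support_mu_xi_finite (hcont : ∀ α β : SIdx p q, {γ | c γ α β ≠ 0}.Finite)
    (α : SIdx p q) {v : SIdx p q → ℂ} (hv : (Function.support v).Finite) :
    (Function.support (mu c (xi α) v)).Finite := by
  refine (hv.biUnion fun b _ => hcont α b).subset fun γ hγ => ?_
  by_contra hno
  simp only [Set.mem_iUnion, Set.mem_ofPred_eq, Function.mem_support, exists_prop,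
    not_exists, not_and, not_not] at hno
  refine hγ ?_
  rw [mu_xi_left_apply]
  refine finsum_eq_zero_of_forall_eq_zero fun b => ?_
  by_cases hb : v b = 0
  · simp [hb]
  · simp [hno b hb]

variable (c) in
lemma mu_xi_add (α : SIdx p q) {v w : SIdx p q → ℂ} (hv : (Function.support v).Finite)
    (hw : (Function.support w).Finite) :
    mu c (xi α) (v + w) = mu c (xi α) v + mu c (xi α) w := by
  have hfin : ∀ {u : SIdx p q → ℂ}, (Function.support u).Finite → ∀ γ,
      (Function.support fun b => koz α b * u b * c γ α b).Finite := fun hu γ =>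
    hu.subset fun b hb => by
      simp only [Function.mem_support] at hb ⊢
      exact fun h => hb (by simp [h])
  funext γ
  simp only [Pi.add_apply, mu_xi_left_apply, ← finsum_add_distrib (hfin hv γ) (hfin hw γ)]
  exact finsum_congr fun b => by ring

variable (c) in
lemma mu_xi_smul (α : SIdx p q) (a : ℂ) (v : SIdx p q → ℂ) :
    mu c (xi α) (a • v) = a • mu c (xi α) v := by
  funext γ
  simp only [Pi.smul_apply, mu_xi_left_apply, smul_eq_mul, mul_finsum]
  exact finsum_congr fun b => by ring

lemma support_finite_of_mem_span (hcont : ∀ α β : SIdx p q, {γ | c γ α β ≠ 0}.Finite)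
    {v : SIdx p q → ℂ} (hv : v ∈ Submodule.span ℂ (⋃ n, M c n)) :
    (Function.support v).Finite := by
  induction hv using Submodule.span_induction with
  | mem v hv =>
    obtain ⟨n, hn⟩ := Set.mem_iUnion.1 hv
    induction n generalizing v with
    | zero => exact hn ▸ support_xi_finite zeroIdx
    | succ n ih =>
      obtain ⟨α, -, w, hw, rfl⟩ := hn
      exact support_mu_xi_finite hcont α (ih w (Set.mem_iUnion.2 ⟨n, hw⟩) hw)
  | zero => simp
  | add v w _ _ hv hw => exact (hv.union hw).subset (Function.support_add _ _)
  | smul a v _ hv => exact hv.subset (Function.support_const_smul_subset a v)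

lemma mu_xi_mem_span (hcont : ∀ α β : SIdx p q, {γ | c γ α β ≠ 0}.Finite)
    {α : SIdx p q} (hα : deg α = 1) {v : SIdx p q → ℂ}
    (hv : v ∈ Submodule.span ℂ (⋃ n, M c n)) :
    mu c (xi α) v ∈ Submodule.span ℂ (⋃ n, M c n) := by
  induction hv using Submodule.span_induction with
  | mem v hv =>
    obtain ⟨n, hn⟩ := Set.mem_iUnion.1 hv
    exact Submodule.subset_span (Set.mem_iUnion.2 ⟨n + 1, α, hα, v, hn, rfl⟩)
  | zero =>
    rw [show mu c (xi α) 0 = 0 by simpa using mu_xi_smul c α 0 0]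
    exact Submodule.zero_mem _
  | add v w hv' hw' hv hw =>
    rw [mu_xi_add c α (support_finite_of_mem_span hcont hv')
      (support_finite_of_mem_span hcont hw')]
    exact Submodule.add_mem _ hv hw
  | smul a v _ hv =>
    rw [mu_xi_smul]
    exact Submodule.smul_mem _ a hv

lemma mem_of_support_finite (P : Submodule ℂ (SIdx p q → ℂ)) {w : SIdx p q → ℂ}
    (hw : (Function.support w).Finite) (h : ∀ δ ∈ Function.support w, xi δ ∈ P) :
    w ∈ P := by
  have : w = ∑ δ ∈ hw.toFinset, w δ • xi δ := by
    funext γ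
    simp only [Finset.sum_apply, Pi.smul_apply, xi, smul_eq_mul, mul_ite, mul_one, mul_zero,
      Finset.sum_ite_eq, Set.Finite.mem_toFinset, Function.mem_support, ne_eq, ite_not]
    split_ifs with h <;> simp [h]
  rw [this]
  exact Submodule.sum_mem _ fun δ hδ => Submodule.smul_mem _ _ (h δ (hw.mem_toFinset.1 hδ))

theorem xi_mem_span (hcont : ∀ α β : SIdx p q, {γ | c γ α β ≠ 0}.Finite)
    (hε : IsCounital c) (hΔ : IsMultiplicative c) (γ : SIdx p q) :
    xi γ ∈ Submodule.span ℂ (⋃ n, M c n) := by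
  induction hn : deg γ using Nat.strong_induction_on generalizing γ with
  | _ n ih =>
  by_cases hγ : γ = zeroIdx
  · exact Submodule.subset_span (Set.mem_iUnion.2 ⟨0, hγ ▸ rfl⟩)
  obtain ⟨g, g₂, hg, hdisj, rfl⟩ := exists_deg_eq_one_merge hγ
  rw [deg_merge hdisj, hg] at hn
  set k := koz g g₂ * (sgn g.2 g₂.2 * binomC g g₂)
  have hk : k ≠ 0 :=
    mul_ne_zero (koz_ne_zero _ _) (mul_ne_zero (sgn_ne_zero _ _) (binomC_ne_zero _ _))
  have hprod := mu_xi_mem_span hcont hg (ih _ (by omega) g₂ rfl)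
  have hlow :
      mu c (xi g) (xi g₂) - k • xi (merge g g₂) ∈ Submodule.span ℂ (⋃ n, M c n) := by
    refine mem_of_support_finite _ (((support_mu_xi_finite hcont g (support_xi_finite g₂)).union
      ((support_xi_finite _).subset (Function.support_const_smul_subset k _))).subset
      (Function.support_sub _ _))
      fun δ hδ => ih (deg δ) ?_ δ rfl
    by_contra! hle
    refine hδ ?_
    rw [Pi.sub_apply, mu_xi_xi, coeff_eq_addCoeff hε hΔ (by omega), addCoeff_merge_self hdisj]
    simp only [Pi.smul_apply, xi, smul_eq_mul]
    split_ifs <;> ring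
  have hxi : xi (merge g g₂) =
      k⁻¹ • (mu c (xi g) (xi g₂) - (mu c (xi g) (xi g₂) - k • xi (merge g g₂))) := by
    rw [sub_sub_cancel, inv_smul_smul₀ hk]
  rw [hxi]
  exact Submodule.smul_mem _ _ (Submodule.sub_mem _ hprod hlow)

end Stmt6

open Stmt6 in
theorem stmt_6_general (p q : ℕ) (c : SIdx p q → SIdx p q → SIdx p q → ℂ)
    -- continuity of `Δ`:
    (hcont : ∀ α β : SIdx p q, {γ : SIdx p q | c γ α β ≠ 0}.Finite)
    -- counit axioms `(ε ⊗ 1) ∘ Δ = id = (1 ⊗ ε) ∘ Δ`: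
    (hcounitl : ∀ γ β : SIdx p q, c γ zeroIdx β = if γ = β then 1 else 0)
    (hcounitr : ∀ γ α : SIdx p q, c γ α zeroIdx = if γ = α then 1 else 0)
    -- `Δ(1) = 1 ⊗ 1`:
    (hone : ∀ α β : SIdx p q,
      c zeroIdx α β = if α = zeroIdx ∧ β = zeroIdx then 1 else 0)
    -- `Δ` is a superalgebra homomorphism (Koszul signs explicit):
    (hhom : ∀ γ γ' α β : SIdx p q,
      (if oddDisjoint γ.2 γ'.2 then sgn γ.2 γ'.2 * c (merge γ γ') α β else 0)
        = ∑ᶠ x : (SIdx p q × SIdx p q) × SIdx p q × SIdx p q,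
            comb x.1.1 x.1.2 α * comb x.2.1 x.2.2 β *
              ((-1 : ℂ) ^ (oddCard x.2.1 * oddCard x.1.2)) *
              c γ x.1.1 x.2.1 * c γ' x.1.2 x.2.2) :
    -- (a) the product formula: leading term of `ξ_α ⋅ ξ_β`
    (∀ α β γ : SIdx p q, deg α + deg β ≤ deg γ →
      mu c (xi α) (xi β) γ =
        if oddDisjoint α.2 β.2 ∧ γ = merge α β
        then koz α β * sgn α.2 β.2 * binomC α β else 0) ∧
    -- (a') the lower degree terms contain no constant term `ξ_0`:
    (∀ α β : SIdx p q, ¬(α = zeroIdx ∧ β = zeroIdx) →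
      mu c (xi α) (xi β) zeroIdx = 0) ∧
    -- (b) the `ξ_α` with `|α| = 1` generate `U_F` as a superalgebra:
    (∀ x : SIdx p q →₀ ℂ, (x : SIdx p q → ℂ) ∈ Submodule.span ℂ (⋃ n, M c n)) := by
  have hε : IsCounital c := ⟨hcounitl, hcounitr⟩
  refine ⟨fun α β γ h => ?_, fun α β h => ?_, fun x => ?_⟩
  · rw [mu_xi_xi, coeff_eq_addCoeff hε hhom h, addCoeff, mul_ite, mul_zero, mul_assoc]
  · rw [mu_xi_xi, hone, if_neg h, mul_zero]
  · exact mem_of_support_finite _ x.hasFiniteSupport fun δ _ => xi_mem_span hcont hε hhom δ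

open Stmt6 in
theorem stmt_6 (p q : ℕ) (c : SIdx p q → SIdx p q → SIdx p q → ℂ)
    -- continuity of `Δ`:
    (hcont : ∀ α β : SIdx p q, {γ : SIdx p q | c γ α β ≠ 0}.Finite)
    -- counit axioms `(ε ⊗ 1) ∘ Δ = id = (1 ⊗ ε) ∘ Δ`:
    (hcounitl : ∀ γ β : SIdx p q, c γ zeroIdx β = if γ = β then 1 else 0)
    (hcounitr : ∀ γ α : SIdx p q, c γ α zeroIdx = if γ = α then 1 else 0)
    -- `Δ(1) = 1 ⊗ 1`:
    (hone : ∀ α β : SIdx p q,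
      c zeroIdx α β = if α = zeroIdx ∧ β = zeroIdx then 1 else 0)
    -- coassociativity:
    (hcoassoc : ∀ γ α β δ : SIdx p q,
      ∑ᶠ τ : SIdx p q, c γ τ δ * c τ α β = ∑ᶠ τ : SIdx p q, c γ α τ * c τ β δ)
    -- `Δ` is a superalgebra homomorphism (Koszul signs explicit):
    (hhom : ∀ γ γ' α β : SIdx p q,
      (if oddDisjoint γ.2 γ'.2 then sgn γ.2 γ'.2 * c (merge γ γ') α β else 0)
        = ∑ᶠ x : (SIdx p q × SIdx p q) × SIdx p q × SIdx p q,
            comb x.1.1 x.1.2 α * comb x.2.1 x.2.2 β *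
              ((-1 : ℂ) ^ (oddCard x.2.1 * oddCard x.1.2)) *
              c γ x.1.1 x.2.1 * c γ' x.1.2 x.2.2) :
    -- (a) the product formula: leading term of `ξ_α ⋅ ξ_β`
    (∀ α β γ : SIdx p q, deg α + deg β ≤ deg γ →
      mu c (xi α) (xi β) γ =
        if oddDisjoint α.2 β.2 ∧ γ = merge α β
        then koz α β * sgn α.2 β.2 * binomC α β else 0) ∧
    -- (a') the lower degree terms contain no constant term `ξ_0`:
    (∀ α β : SIdx p q, ¬(α = zeroIdx ∧ β = zeroIdx) →
      mu c (xi α) (xi β) zeroIdx = 0) ∧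
    -- (b) the `ξ_α` with `|α| = 1` generate `U_F` as a superalgebra:
    (∀ x : SIdx p q →₀ ℂ, (x : SIdx p q → ℂ) ∈ Submodule.span ℂ (⋃ n, M c n)) :=
  stmt_6_general p q c hcont hcounitl hcounitr hone hhom
end

section
/- Let V be a vertex algebra with Li filtration F^•V, where F^pV is spanned by elements a^1_{(−n_1−1)} ⋯ a^r_{(−n_r−1)} |0⟩ with n_i ≥ 0 and n_1 + ⋯ + n_r ≥ p. Then F^pV_{(n)} F^qV ⊆ F^{p+q−n−1}V for all n ∈ Z, and F^pV_{(n)} F^qV ⊆ F^{p+q−n}V for n ≥ 0. -/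
/-!
STATEMENT 16 (Properties of the Li filtration).

For a vertex algebra `V` with Li filtration `F^p V` (spanned by the
elements `a¹_{(−n₁−1)} ⋯ aʳ_{(−n_r−1)} |0⟩` with `n_i ≥ 0`,
`n₁ + ⋯ + n_r ≥ p`), one has `F^p V_{(n)} F^q V ⊆ F^{p+q−n−1} V` for all
`n ∈ ℤ`, and `F^p V_{(n)} F^q V ⊆ F^{p+q−n} V` for `n ≥ 0`.
-/

/-- Binomial coefficient `binom(m, k)` with integer top argument. -/
def zbinom (m : ℤ) (k : ℕ) : ℚ :=
  (∏ i ∈ Finset.range k, ((m : ℚ) - i)) / (k.factorial : ℚ)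

/-- A vertex algebra over `ℂ`: a vector space `V` with a vacuum vector and
bilinear products `op n a b = a_{(n)} b` (`n ∈ ℤ`, the coefficients of the
state-field correspondence `Y(a, z)b = Σ_n a_{(n)}b z^{-n-1}`), satisfying
truncation, the vacuum and creation axioms, and the Borcherds identity. -/
structure VertexAlgebra (V : Type) [AddCommGroup V] [Module ℂ V] where
  /-- the `n`-th product `a_{(n)} b` -/
  op : ℤ → V →ₗ[ℂ] V →ₗ[ℂ] V
  /-- the vacuum `|0⟩` -/
  vac : V
  trunc : ∀ a b : V, ∃ N : ℤ, ∀ n : ℤ, N ≤ n → op n a b = 0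
  vacuum : ∀ (n : ℤ) (a : V), op n vac a = if n = -1 then a else 0
  creation_neg : ∀ a : V, op (-1) a vac = a
  creation : ∀ n : ℤ, 0 ≤ n → ∀ a : V, op n a vac = 0
  borcherds : ∀ (a b c : V) (p q m : ℤ),
    (∑ᶠ i : ℕ, ((zbinom m i : ℚ) : ℂ) • op (m + q - i) (op (p + i) a b) c)
      = ∑ᶠ i : ℕ, ((-1 : ℂ) ^ i * ((zbinom p i : ℚ) : ℂ)) •
          (op (m + p - i) a (op (q + i) b c)
            - ((-1 : ℂ) ^ p • op (p + q - i) b (op (m + i) a c)))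

namespace VertexAlgebra

variable {V : Type} [AddCommGroup V] [Module ℂ V]

/-- The translation operator `T a = a_{(-2)} |0⟩`. -/
def T (S : VertexAlgebra V) (a : V) : V := S.op (-2) a S.vac

/-- Iterated normally ordered monomials
`liProd [(a¹,n₁),…,(aʳ,n_r)] = a¹_{(-n₁-1)} ⋯ aʳ_{(-n_r-1)} |0⟩`. -/
def liProd (S : VertexAlgebra V) : List (V × ℕ) → V
  | [] => S.vac
  | (a, n) :: t => S.op (-(n : ℤ) - 1) a (liProd S t)

/-- The Li filtration: `F^p V` is spanned by the monomials
`a¹_{(-n₁-1)} ⋯ aʳ_{(-n_r-1)} |0⟩` with `n₁ + ⋯ + n_r ≥ p`. -/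
def liF (S : VertexAlgebra V) (p : ℤ) : Submodule ℂ V :=
  Submodule.span ℂ
    {v | ∃ L : List (V × ℕ), p ≤ ((L.map Prod.snd).sum : ℤ) ∧ v = liProd S L}

/-! ### Auxiliary lemmas -/

lemma zbinom_zero_right (m : ℤ) : zbinom m 0 = 1 := by
  simp [zbinom]

lemma zbinom_zero_left {k : ℕ} (hk : k ≠ 0) : zbinom 0 k = 0 := by
  unfold zbinom
  rw [Finset.prod_eq_zero (i := 0) (by simpa using Nat.pos_of_ne_zero hk) (by simp)]
  simp

lemma finsum_mem_submodule {f : ℕ → V} {N : Submodule ℂ V} (h : ∀ i, f i ∈ N) :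
    (∑ᶠ i, f i) ∈ N := by
  by_cases hf : (Function.support f).Finite
  · rw [finsum_eq_sum f hf]
    exact Submodule.sum_mem _ fun i _ => h i
  · rw [finsum_of_infinite_support hf]
    exact N.zero_mem

lemma liF_antitone (S : VertexAlgebra V) {p p' : ℤ} (h : p ≤ p') :
    liF S p' ≤ liF S p :=
  Submodule.span_mono (fun v ⟨L, hL, hv⟩ => ⟨L, le_trans h hL, hv⟩)

/-- Applying `u_{(-k-1)}` raises the filtration degree by `k`. -/
lemma op_prepend_mem (S : VertexAlgebra V) (u : V) (k : ℕ) {r : ℤ} {x : V}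
    (hx : x ∈ liF S r) : S.op (-(k : ℤ) - 1) u x ∈ liF S (r + k) := by
  induction hx using Submodule.span_induction with
  | mem v hv =>
    obtain ⟨L, hL, rfl⟩ := hv
    refine Submodule.subset_span ⟨(u, k) :: L, ?_, by simp [liProd]⟩
    simp only [List.map_cons, List.sum_cons]
    rw [Nat.cast_add]
    omega
  | zero => rw [map_zero]; exact zero_mem _
  | add y z _ _ hy hz => rw [map_add]; exact add_mem hy hz
  | smul c y _ hy => rw [map_smul]; exact Submodule.smul_mem _ _ hy

/-- Key lemma K: for any `u : V` and a Li monomial `c`,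
`u_{(n)} c ∈ F^{w(c)-n-1}`, and `∈ F^{w(c)-n}` if `n ≥ 0`. -/
lemma keyK (S : VertexAlgebra V) (M : List (V × ℕ)) :
    ∀ (u : V) (n : ℤ),
      S.op n u (liProd S M) ∈ liF S (((M.map Prod.snd).sum : ℤ) - n - 1) ∧
      (0 ≤ n → S.op n u (liProd S M) ∈ liF S (((M.map Prod.snd).sum : ℤ) - n)) := by
  induction M with
  | nil =>
    intro u n
    simp only [liProd, List.map_nil, List.sum_nil, Nat.cast_zero]
    have h2 : 0 ≤ n → S.op n u S.vac ∈ liF S (0 - n) := by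
      intro hn; rw [S.creation n hn u]; exact zero_mem _
    refine ⟨?_, h2⟩
    rcases lt_trichotomy n (-1) with h | h | h
    · -- n ≤ -2 : the result is the monomial `[(u, -n-1)]`
      obtain ⟨k, hkn⟩ : ∃ k : ℕ, (k : ℤ) = -n - 1 := ⟨(-n - 1).toNat, by omega⟩
      refine Submodule.subset_span ⟨[(u, k)], ?_, ?_⟩
      · have hwt : ((List.map Prod.snd [(u, k)]).sum : ℤ) = (k : ℤ) := by
          simp only [List.map_cons, List.map_nil, List.sum_cons, List.sum_nil, Nat.add_zero]
        rw [hwt]; omega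
      · have hn' : n = -(k : ℤ) - 1 := by omega
        rw [hn']
        simp only [liProd]
    · subst h
      refine Submodule.subset_span ⟨[(u, 0)], by simp, ?_⟩
      simp [liProd, S.creation_neg]
    · rw [S.creation n (by omega) u]; exact zero_mem _
  | cons hd t ih =>
    obtain ⟨v, m⟩ := hd
    intro u n
    set c := liProd S t with hc
    set s : ℤ := ((t.map Prod.snd).sum : ℤ) with hs
    have spec := (S.borcherds u v c 0 (-(m : ℤ) - 1) n).symm
    rw [finsum_eq_single _ 0 (by
      intro x hx
      simp [zbinom_zero_left hx])] at spec
    simp only [zbinom_zero_right, Nat.cast_zero, add_zero, sub_zero, pow_zero, one_mul,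
      Rat.cast_one, one_smul, zpow_zero, zero_add] at spec
    -- spec : ∑ᶠ i, zbinom n i • op (n + (-(m)-1) - i) (op (0+i) u v) c
    --      = op n u (op (-(m)-1) v c) - op (-(m)-1) v (op n u c)
    have key : S.op n u (S.op (-(m : ℤ) - 1) v c)
        = S.op (-(m : ℤ) - 1) v (S.op n u c)
          + ∑ᶠ i : ℕ, ((zbinom n i : ℚ) : ℂ) •
              S.op (n + (-(m : ℤ) - 1) - i) (S.op (i : ℤ) u v) c := by
      rw [← spec]; abel
    have hprod : liProd S ((v, m) :: t) = S.op (-(m : ℤ) - 1) v c := rfl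
    have hwt : (((((v, m) :: t).map Prod.snd).sum : ℕ) : ℤ) = (m : ℤ) + s := by
      simp [hs]
    have mem1 : ∀ T : ℤ, T ≤ (m : ℤ) + s - n - 1 →
        S.op (-(m : ℤ) - 1) v (S.op n u c) ∈ liF S T := by
      intro T hT
      refine liF_antitone S (p' := s - n - 1 + m) (by omega) ?_
      exact op_prepend_mem S v m ((ih u n).1)
    have mem1' : 0 ≤ n → ∀ T : ℤ, T ≤ (m : ℤ) + s - n →
        S.op (-(m : ℤ) - 1) v (S.op n u c) ∈ liF S T := by
      intro hn T hT
      refine liF_antitone S (p' := s - n + m) (by omega) ?_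
      exact op_prepend_mem S v m ((ih u n).2 hn)
    have mem2 : ∀ T : ℤ, T ≤ (m : ℤ) + s - n →
        (∑ᶠ i : ℕ, ((zbinom n i : ℚ) : ℂ) •
          S.op (n + (-(m : ℤ) - 1) - i) (S.op (i : ℤ) u v) c) ∈ liF S T := by
      intro T hT
      refine finsum_mem_submodule fun i => Submodule.smul_mem _ _ ?_
      refine liF_antitone S (p' := s - (n + (-(m : ℤ) - 1) - i) - 1) ?_ ?_
      · have : (0 : ℤ) ≤ (i : ℤ) := Int.natCast_nonneg i
        omega
      · exact (ih (S.op (i : ℤ) u v) (n + (-(m : ℤ) - 1) - i)).1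
    rw [hprod, hwt, key]
    constructor
    · exact add_mem (mem1 _ le_rfl) (mem2 _ (by omega))
    · intro hn
      exact add_mem (mem1' hn _ le_rfl) (mem2 _ le_rfl)

/-- Key lemma K, extended by linearity: `u_{(n)} F^q ⊆ F^{q-n-1}`,
and `⊆ F^{q-n}` when `n ≥ 0`. -/
lemma opK (S : VertexAlgebra V) (u : V) {q : ℤ} {b : V} (hb : b ∈ liF S q) :
    ∀ n : ℤ, S.op n u b ∈ liF S (q - n - 1) ∧
      (0 ≤ n → S.op n u b ∈ liF S (q - n)) := by
  induction hb using Submodule.span_induction with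
  | mem x hx =>
    obtain ⟨M, hM, rfl⟩ := hx
    intro n
    exact ⟨liF_antitone S (by omega) ((keyK S M u n).1),
      fun hn => liF_antitone S (by omega) ((keyK S M u n).2 hn)⟩
  | zero =>
    intro n
    rw [map_zero]
    exact ⟨zero_mem _, fun _ => zero_mem _⟩
  | add y z _ _ hy hz =>
    intro n
    rw [map_add]
    exact ⟨add_mem (hy n).1 (hz n).1, fun hn => add_mem ((hy n).2 hn) ((hz n).2 hn)⟩
  | smul c y _ hy =>
    intro n
    rw [map_smul]
    exact ⟨Submodule.smul_mem _ _ (hy n).1,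
      fun hn => Submodule.smul_mem _ _ ((hy n).2 hn)⟩

/-- Key lemma L: for a Li monomial `a` of weight `w` and `b ∈ F^q`,
`a_{(n)} b ∈ F^{w+q-n-1}`, and `∈ F^{w+q-n}` if `n ≥ 0`. -/
lemma keyL (S : VertexAlgebra V) (L : List (V × ℕ)) :
    ∀ (q : ℤ) (b : V), b ∈ liF S q → ∀ n : ℤ,
      S.op n (liProd S L) b ∈ liF S (((L.map Prod.snd).sum : ℤ) + q - n - 1) ∧
      (0 ≤ n → S.op n (liProd S L) b ∈ liF S (((L.map Prod.snd).sum : ℤ) + q - n)) := by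
  induction L with
  | nil =>
    intro q b hb n
    simp only [liProd, List.map_nil, List.sum_nil, Nat.cast_zero, zero_add]
    rw [S.vacuum n b]
    constructor
    · split
      · next h => subst h; exact liF_antitone S (by omega) hb
      · exact zero_mem _
    · intro hn
      split
      · next h => omega
      · exact zero_mem _
  | cons hd t ih =>
    obtain ⟨u, m⟩ := hd
    intro q b hb n
    set a' := liProd S t with ha'
    set s : ℤ := ((t.map Prod.snd).sum : ℤ) with hs
    have spec := S.borcherds u a' b (-(m : ℤ) - 1) n 0
    rw [finsum_eq_single _ 0 (by
      intro x hx
      rw [zbinom_zero_left hx]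
      simp)] at spec
    simp only [zbinom_zero_right, Nat.cast_zero, add_zero, sub_zero, Rat.cast_one,
      one_smul, zero_add] at spec
    -- spec : op n (op (-(m)-1) u a') b = ∑ᶠ i, coeff i • (A i - (-1)^(-(m)-1) • B i)
    have hprod : liProd S ((u, m) :: t) = S.op (-(m : ℤ) - 1) u a' := rfl
    have hwt : (((((u, m) :: t).map Prod.snd).sum : ℕ) : ℤ) = (m : ℤ) + s := by
      simp [hs]
    have memA : ∀ i : ℕ, ∀ T : ℤ, T ≤ (m : ℤ) + s + q - n - 1 →
        S.op (-(m : ℤ) - 1 - i) u (S.op (n + i) a' b) ∈ liF S T := by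
      intro i T hT
      have h1 : S.op (n + i) a' b ∈ liF S (s + q - (n + i) - 1) :=
        (ih q b hb (n + i)).1
      have h2 : (-(m : ℤ) - 1 - i) = -((m + i : ℕ) : ℤ) - 1 := by
        push_cast; ring
      rw [h2]
      refine liF_antitone S (p' := s + q - (n + i) - 1 + (m + i : ℕ)) ?_ ?_
      · push_cast; omega
      · exact op_prepend_mem S u (m + i) h1
    have memA' : 0 ≤ n → ∀ i : ℕ, ∀ T : ℤ, T ≤ (m : ℤ) + s + q - n →
        S.op (-(m : ℤ) - 1 - i) u (S.op (n + i) a' b) ∈ liF S T := by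
      intro hn i T hT
      have h1 : S.op (n + i) a' b ∈ liF S (s + q - (n + i)) :=
        (ih q b hb (n + i)).2 (by omega)
      have h2 : (-(m : ℤ) - 1 - i) = -((m + i : ℕ) : ℤ) - 1 := by
        push_cast; ring
      rw [h2]
      refine liF_antitone S (p' := s + q - (n + i) + (m + i : ℕ)) ?_ ?_
      · push_cast; omega
      · exact op_prepend_mem S u (m + i) h1
    have memB : ∀ i : ℕ, ∀ T : ℤ, T ≤ (m : ℤ) + s + q - n →
        S.op (-(m : ℤ) - 1 + n - i) a' (S.op (i : ℤ) u b) ∈ liF S T := by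
      intro i T hT
      have h1 : S.op (i : ℤ) u b ∈ liF S (q - (i : ℤ)) :=
        (opK S u hb (i : ℤ)).2 (by omega)
      have h2 := (ih (q - (i : ℤ)) _ h1 (-(m : ℤ) - 1 + n - i)).1
      refine liF_antitone S
        (p' := s + (q - (i : ℤ)) - (-(m : ℤ) - 1 + n - i) - 1) ?_ h2
      have : (0 : ℤ) ≤ (i : ℤ) := Int.natCast_nonneg i
      omega
    rw [hprod, hwt, spec]
    constructor
    · refine finsum_mem_submodule fun i => Submodule.smul_mem _ _ ?_
      refine sub_mem (memA i _ le_rfl) (Submodule.smul_mem _ _ ?_)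
      exact memB i _ (by omega)
    · intro hn
      refine finsum_mem_submodule fun i => Submodule.smul_mem _ _ ?_
      refine sub_mem (memA' hn i _ le_rfl) (Submodule.smul_mem _ _ ?_)
      exact memB i _ le_rfl

end VertexAlgebra

open VertexAlgebra in
theorem stmt_16 {V : Type} [AddCommGroup V] [Module ℂ V] (S : VertexAlgebra V)
    (p q : ℤ) (hp : 0 ≤ p) (hq : 0 ≤ q)
    (a b : V) (ha : a ∈ liF S p) (hb : b ∈ liF S q) :
    (∀ n : ℤ, S.op n a b ∈ liF S (p + q - n - 1)) ∧
    (∀ n : ℤ, 0 ≤ n → S.op n a b ∈ liF S (p + q - n)) := by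
  have main : ∀ n : ℤ, S.op n a b ∈ liF S (p + q - n - 1) ∧
      (0 ≤ n → S.op n a b ∈ liF S (p + q - n)) := by
    induction ha using Submodule.span_induction with
    | mem x hx =>
      obtain ⟨L, hL, rfl⟩ := hx
      intro n
      exact ⟨liF_antitone S (by omega) ((keyL S L q b hb n).1),
        fun hn => liF_antitone S (by omega) ((keyL S L q b hb n).2 hn)⟩
    | zero =>
      intro n
      simp only [map_zero, LinearMap.zero_apply]
      exact ⟨zero_mem _, fun _ => zero_mem _⟩
    | add y z _ _ hy hz =>
      intro n
      simp only [map_add, LinearMap.add_apply]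
      exact ⟨add_mem (hy n).1 (hz n).1, fun hn => add_mem ((hy n).2 hn) ((hz n).2 hn)⟩
    | smul c y _ hy =>
      intro n
      simp only [map_smul, LinearMap.smul_apply]
      exact ⟨Submodule.smul_mem _ _ (hy n).1,
        fun hn => Submodule.smul_mem _ _ ((hy n).2 hn)⟩
  exact ⟨fun n => (main n).1, fun n hn => (main n).2 hn⟩
end
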